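/- A priori estimate for the model operator N₁ at the ODE level: let ξ ∈ ℝ, T > 0, and let v : ℝ → ℂ be a C¹ function supported in [-T/2, T/2]. Set (L v)(t) = v'(t) - t|ξ| v(t) (which is i times the symbol-level operator D_t + it|ξ|). Then T · ‖Lv‖_{L²(ℝ)} ≥ ‖v‖_{L²(ℝ)}. -/

import Mathlib

/-!
Multiplying by the integrating factor `E t = exp (-c t² / 2)` turns the equation into
`(E v)' = E · (v' - t c v)`. For `c ≥ 0` the factor `E` decreases in `|t|`, so integrating from the
endpoint of `[a, b]` lying on the same side of `0` as `t` (where `v` vanishes) gives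
`|v t| ≤ ∫_a^b |v' - t c v|`. Two applications of Hölder's inequality on `[a, b]` turn this uniform
bound into `‖v‖₂ ≤ (b - a) ‖v' - t c v‖₂`.
-/

open MeasureTheory Set
open scoped Interval

theorem eLpNorm_le_measure_mul_eLpNorm_of_forall_enorm_le {α E F : Type*} [MeasurableSpace α]
    [NormedAddCommGroup E] [NormedAddCommGroup F] {μ : Measure α} {p : ENNReal} (hp : 1 ≤ p)
    {S : Set α} {f : α → E} {g : α → F} (hf : Function.support f ⊆ S)
    (hg : AEStronglyMeasurable g (μ.restrict S))
    (hfg : ∀ x, ‖f x‖ₑ ≤ eLpNorm g 1 (μ.restrict S)) :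
    eLpNorm f p μ ≤ μ S * eLpNorm g p μ := by
  have hexp : 0 ≤ 1 - 1 / p.toReal := by
    rcases eq_or_ne p ⊤ with rfl | hp_top
    · simp
    · rw [sub_nonneg]
      exact div_le_one_of_le₀ (by simpa using ENNReal.toReal_mono hp_top hp) (by positivity)
  calc eLpNorm f p μ = eLpNorm f p (μ.restrict S) :=
        (eLpNorm_restrict_eq_of_support_subset hf).symm
    _ ≤ eLpNorm g 1 (μ.restrict S) * μ S ^ p.toReal⁻¹ := by
        simpa using eLpNorm_le_of_ae_enorm_bound (p := p) (μ := μ.restrict S) (ae_of_all _ hfg)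
    _ ≤ eLpNorm g p (μ.restrict S) * μ S ^ (1 - 1 / p.toReal) * μ S ^ p.toReal⁻¹ := by
        gcongr
        simpa using eLpNorm_le_eLpNorm_mul_rpow_measure_univ hp hg
    _ ≤ eLpNorm g p μ * μ S ^ (1 - 1 / p.toReal) * μ S ^ p.toReal⁻¹ := by
        gcongr
        exact Measure.restrict_le_self
    _ = μ S * eLpNorm g p μ := by
        rw [mul_assoc, ← ENNReal.rpow_add_of_nonneg _ _ hexp (by positivity)]
        simp [mul_comm]

noncomputable def modelOp (c : ℝ) (v : ℝ → ℂ) (t : ℝ) : ℂ := deriv v t - (t * c : ℝ) * v t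

noncomputable def gaussianWeight (c t : ℝ) : ℝ := Real.exp (-(t ^ 2 * c) / 2)

section ModelOperator

variable {c : ℝ} {v : ℝ → ℂ}

theorem continuous_modelOp (hv : ContDiff ℝ 1 v) : Continuous (modelOp c v) := by
  unfold modelOp
  have := hv.continuous_deriv le_rfl
  fun_prop

theorem continuous_gaussianWeight : Continuous (gaussianWeight c) := by
  unfold gaussianWeight
  fun_prop

theorem gaussianWeight_pos (c t : ℝ) : 0 < gaussianWeight c t := Real.exp_pos _

theorem gaussianWeight_le_of_abs_le (hc : 0 ≤ c) {s t : ℝ} (h : |t| ≤ |s|) :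
    gaussianWeight c s ≤ gaussianWeight c t := by
  have : t ^ 2 ≤ s ^ 2 := sq_le_sq.mpr h
  unfold gaussianWeight
  gcongr

theorem hasDerivAt_gaussianWeight_mul {t : ℝ} (hv : DifferentiableAt ℝ v t) :
    HasDerivAt (fun s ↦ (gaussianWeight c s : ℂ) * v s)
      (gaussianWeight c t * modelOp c v t) t := by
  have hexp : HasDerivAt (fun s ↦ -(s ^ 2 * c) / 2) (-(t * c)) t := by
    refine ((((hasDerivAt_pow 2 t).mul_const c).neg).div_const 2).congr_deriv ?_
    push_cast
    ring
  refine (hexp.exp.ofReal_comp.mul hv.hasDerivAt).congr_deriv ?_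
  simp only [modelOp, gaussianWeight]
  push_cast
  ring

theorem norm_le_integral_uIoc_norm_modelOp (hc : 0 ≤ c) (hv : ContDiff ℝ 1 v) {x t : ℝ}
    (hx : v x = 0) (hxt : ∀ s ∈ Ι x t, |t| ≤ |s|) :
    ‖v t‖ ≤ ∫ s in Ι x t, ‖modelOp c v s‖ := by
  have hE := gaussianWeight_pos c t
  have hEw : Continuous fun s ↦ (gaussianWeight c s : ℂ) * modelOp c v s :=
    (Complex.continuous_ofReal.comp continuous_gaussianWeight).mul (continuous_modelOp hv)
  have hftc : ∫ s in x..t, (gaussianWeight c s : ℂ) * modelOp c v s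
      = (gaussianWeight c t : ℂ) * v t := by
    rw [intervalIntegral.integral_eq_sub_of_hasDerivAt
      (fun s _ ↦ hasDerivAt_gaussianWeight_mul (hv.differentiable one_ne_zero s))
      (hEw.intervalIntegrable _ _), hx, mul_zero, sub_zero]
  refine le_of_mul_le_mul_left ?_ hE
  calc gaussianWeight c t * ‖v t‖
      = ‖∫ s in x..t, (gaussianWeight c s : ℂ) * modelOp c v s‖ := by
        rw [hftc, norm_mul, Complex.norm_real, Real.norm_of_nonneg hE.le]
    _ ≤ ∫ s in Ι x t, ‖(gaussianWeight c s : ℂ) * modelOp c v s‖ :=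
        intervalIntegral.norm_integral_le_integral_norm_uIoc
    _ ≤ ∫ s in Ι x t, gaussianWeight c t * ‖modelOp c v s‖ := by
        refine setIntegral_mono_on hEw.norm.integrableOn_uIoc
          ((continuous_modelOp hv).norm.const_mul _).integrableOn_uIoc measurableSet_uIoc ?_
        intro s hs
        rw [norm_mul, Complex.norm_real, Real.norm_of_nonneg (gaussianWeight_pos c s).le]
        exact mul_le_mul_of_nonneg_right (gaussianWeight_le_of_abs_le hc (hxt s hs))
          (norm_nonneg _)
    _ = gaussianWeight c t * ∫ s in Ι x t, ‖modelOp c v s‖ := integral_const_mul _ _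

theorem norm_le_integral_Icc_norm_modelOp (hc : 0 ≤ c) (hv : ContDiff ℝ 1 v) {a b t : ℝ}
    (ha : v a = 0) (hb : v b = 0) (ht : t ∈ Icc a b) :
    ‖v t‖ ≤ ∫ s in Icc a b, ‖modelOp c v s‖ := by
  obtain ⟨x, hx, hsub, hxt⟩ :
      ∃ x, v x = 0 ∧ Ι x t ⊆ Icc a b ∧ ∀ s ∈ Ι x t, |t| ≤ |s| := by
    rcases le_or_gt t 0 with h0 | h0
    · refine ⟨a, ha, ?_, fun s hs ↦ ?_⟩ <;> rw [uIoc_of_le ht.1] at *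
      · exact Ioc_subset_Icc_self.trans (Icc_subset_Icc_right ht.2)
      · rw [abs_of_nonpos h0, abs_of_nonpos (hs.2.trans h0)]
        linarith [hs.2]
    · refine ⟨b, hb, ?_, fun s hs ↦ ?_⟩ <;> rw [uIoc_of_ge ht.2] at *
      · exact Ioc_subset_Icc_self.trans (Icc_subset_Icc_left ht.1)
      · rw [abs_of_pos h0, abs_of_pos (h0.trans hs.1)]
        exact hs.1.le
  calc ‖v t‖ ≤ ∫ s in Ι x t, ‖modelOp c v s‖ :=
        norm_le_integral_uIoc_norm_modelOp hc hv hx hxt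
    _ ≤ ∫ s in Icc a b, ‖modelOp c v s‖ :=
        setIntegral_mono_set (continuous_modelOp hv).norm.integrableOn_Icc
          (ae_of_all _ fun _ ↦ norm_nonneg _) hsub.eventuallyLE

theorem enorm_le_eLpNorm_one_modelOp (hc : 0 ≤ c) (hv : ContDiff ℝ 1 v) {a b : ℝ}
    (hsupp : Function.support v ⊆ Icc a b) (t : ℝ) :
    ‖v t‖ₑ ≤ eLpNorm (modelOp c v) 1 (volume.restrict (Icc a b)) := by
  have hzero : ∀ x ∉ Ioo a b, v x = 0 := by
    rw [← hv.continuous.isOpen_support.subset_interior_iff, interior_Icc] at hsupp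
    exact fun x hx ↦ Function.notMem_support.mp fun h ↦ hx (hsupp h)
  have hbound : ‖v t‖ ≤ ∫ s in Icc a b, ‖modelOp c v s‖ := by
    by_cases ht : t ∈ Icc a b
    · exact norm_le_integral_Icc_norm_modelOp hc hv (hzero a fun h ↦ h.1.ne rfl)
        (hzero b fun h ↦ h.2.ne rfl) ht
    · rw [hzero t fun h ↦ ht (Ioo_subset_Icc_self h), norm_zero]
      exact setIntegral_nonneg measurableSet_Icc fun _ _ ↦ norm_nonneg _
  rw [eLpNorm_one_eq_lintegral_enorm, ← ofReal_norm,
    ← ofReal_integral_norm_eq_lintegral_enorm (continuous_modelOp hv).integrableOn_Icc]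
  exact ENNReal.ofReal_le_ofReal hbound

end ModelOperator

theorem stmt_4_general (ξ T : ℝ) (v : ℝ → ℂ)
    (hv : ContDiff ℝ 1 v)
    (hsupp : Function.support v ⊆ Set.Icc (-T / 2) (T / 2)) :
    eLpNorm v 2 volume ≤
      ENNReal.ofReal T *
        eLpNorm (fun t => deriv v t - (t * |ξ| : ℝ) * v t) 2 volume := by
  have hvol : volume (Icc (-T / 2) (T / 2)) = ENNReal.ofReal T := by
    rw [Real.volume_Icc]
    ring_nf
  rw [← hvol]
  exact eLpNorm_le_measure_mul_eLpNorm_of_forall_enorm_le one_le_two hsupp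
    (continuous_modelOp hv).aestronglyMeasurable
    (enorm_le_eLpNorm_one_modelOp (abs_nonneg ξ) hv hsupp)

/-- A priori estimate for the model operator `N₁` at the ODE level: if
`v : ℝ → ℂ` is `C¹` and supported in `[-T/2, T/2]`, and
`(L v) t = v' t - t |ξ| v t`, then `T · ‖Lv‖_{L²} ≥ ‖v‖_{L²}`. -/
theorem stmt_4 (ξ T : ℝ) (hT : 0 < T) (v : ℝ → ℂ)
    (hv : ContDiff ℝ 1 v)
    (hsupp : Function.support v ⊆ Set.Icc (-T / 2) (T / 2)) :
    eLpNorm v 2 volume ≤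
      ENNReal.ofReal T *
        eLpNorm (fun t => deriv v t - (t * |ξ| : ℝ) * v t) 2 volume :=
  stmt_4_general ξ T v hv hsupp
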